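/- Let R = ℚ[x_1,...,x_m]/I be the cohomology ring of an m-stage generalized Bott manifold, with last fiber dimension n_m, and let c = c_1(ξ_m) = ∑_{j=1}^{n_m} ∑_{k<m} a^m_{jk} x_k ∈ R. If b ≠ 0 is a rational number and w is a linear combination of x_1,...,x_{m-1} such that (b·x_m + w)^{n_m+1} = 0 in R, then (n_m+1)·w = b·c. Consequently, the set of such elements b·x_m + w lies in a one-dimensional subspace of the degree-2 part of R. -/

import Mathlib

/-!
Evaluate along the `ℚ`-algebra map to the dual numbers over `ℚ[t]` sending `x_m ↦ t`, one fixed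
`x_k` (`k < m`) to `ε`, and every other generator to `0`. Since the linear forms of stage `i` only
involve `x_r` with `r < i`, every relation but the top one is killed (the `k`-th becomes
`ε ^ (n_k + 1) = 0`), while the top one becomes `t ^ (n + 1) + c_k t ^ n ε`, where
`c_k = ∑_j a^m_{jk}` is the `x_k`-coefficient of `c`. Hence
`(b t + w_k ε) ^ (n + 1) = z (t ^ (n + 1) + c_k t ^ n ε)` for some `z`; the `ε`-free part forces
`z ≡ b ^ (n + 1)` modulo `ε`, and the coefficient of `t ^ n ε` then gives
`(n + 1) b ^ n w_k = b ^ (n + 1) c_k`.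
-/

open MvPolynomial

/-- The defining ideal of the rational cohomology ring of a generalized Bott manifold. -/
noncomputable def genBottIdeal (m : ℕ) (n : Fin m → ℕ)
    (a : (i : Fin m) → Fin (n i) → Fin m → ℚ) :
    Ideal (MvPolynomial (Fin m) ℚ) :=
  Ideal.span (Set.range fun i : Fin m =>
    X i * ∏ j : Fin (n i), ((∑ k : Fin m, C (a i j k) * X k) + X i))

open TrivSqZeroExt DualNumber
open scoped Finset

theorem mul_prod_add_eq_of_mul_eq_zero {R ι : Type*} [CommRing R] (s : Finset ι) (x : R)
    {b : ι → R} (hb : ∀ i j, b i * b j = 0) :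
    x * ∏ j ∈ s, (x + b j) = x ^ (#s + 1) + x ^ #s * ∑ j ∈ s, b j := by
  classical
  induction s using Finset.induction with
  | empty => simp
  | insert i s hi ih =>
    have hbs : b i * ∑ j ∈ s, b j = 0 := by
      rw [Finset.mul_sum]; exact Finset.sum_eq_zero fun j _ => hb i j
    rw [Finset.prod_insert hi, Finset.card_insert_of_notMem hi, Finset.sum_insert hi,
      mul_left_comm, ih]
    linear_combination x ^ #s * hbs

theorem Ideal.map_span_range_le_span_singleton {A B F ι : Type*} [CommSemiring A]
    [CommSemiring B] [FunLike F A B] [RingHomClass F A B] (f : F) (g : ι → A) (i : ι)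
    (h : ∀ j ≠ i, f (g j) = 0) : (Ideal.span (Set.range g)).map f ≤ Ideal.span {f (g i)} := by
  rw [Ideal.map_span, Ideal.span_le]
  rintro _ ⟨_, ⟨j, rfl⟩, rfl⟩
  rcases eq_or_ne j i with rfl | hj
  · exact Ideal.subset_span rfl
  · simp [h j hj]

theorem aeval_sum_C_mul_X {σ R A : Type*} [Fintype σ] [CommSemiring R] [CommSemiring A]
    [Algebra R A] (f : σ → A) (c : σ → R) : aeval f (∑ r, C (c r) * X r) = ∑ r, c r • f r := by
  simp [Algebra.smul_def]

open scoped Polynomial in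
theorem natCast_add_one_mul_eq_of_pow_mem_span {K : Type*} [CommRing K] [IsDomain K] {N : ℕ}
    {b u v : K} (hb : b ≠ 0)
    (h : (b • inl Polynomial.X + u • ε : K[X][ε]) ^ (N + 1) ∈
      Ideal.span {inl Polynomial.X ^ (N + 1) + inl Polynomial.X ^ N * (v • ε)}) :
    ((N : K) + 1) * u = b * v := by
  obtain ⟨z, hz⟩ := Ideal.mem_span_singleton'.mp h
  have hz1 : fst z = Polynomial.C b ^ (N + 1) := by
    simpa [Polynomial.smul_eq_C_mul, mul_pow] using congrArg fst hz
  have hsnd : Polynomial.C b ^ (N + 1) * (Polynomial.C v * Polynomial.X ^ N)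
      + snd z * Polynomial.X ^ (N + 1)
      = ((N : K[X]) + 1) * (Polynomial.C b ^ N * Polynomial.C u * Polynomial.X ^ N) := by
    simpa [hz1, Polynomial.smul_eq_C_mul, mul_pow] using congrArg snd hz
  have hsnd_C : Polynomial.C (((N : K) + 1) * u * b ^ N) * Polynomial.X ^ N
      = Polynomial.C (b * v * b ^ N) * Polynomial.X ^ N + snd z * Polynomial.X ^ (N + 1) := by
    simp only [map_mul, map_add, map_natCast, map_one, map_pow]
    linear_combination -hsnd
  have hcoeff := congrArg (Polynomial.coeff · N) hsnd_C
  rw [Polynomial.coeff_add, Polynomial.coeff_C_mul_X_pow, Polynomial.coeff_C_mul_X_pow,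
    Polynomial.coeff_mul_X_pow', if_pos rfl, if_pos rfl, if_neg (by omega), add_zero] at hcoeff
  exact mul_right_cancel₀ (pow_ne_zero N hb) hcoeff

section GenBott

variable {m : ℕ} {n : Fin m → ℕ} {a : (i : Fin m) → Fin (n i) → Fin m → ℚ} {L k : Fin m}

variable (n a) in
noncomputable def bottRelation (i : Fin m) : MvPolynomial (Fin m) ℚ :=
  X i * ∏ j : Fin (n i), ((∑ k : Fin m, C (a i j k) * X k) + X i)

theorem genBottIdeal_eq_span : genBottIdeal m n a = Ideal.span (Set.range (bottRelation n a)) :=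
  rfl

variable (L k) in
noncomputable def dualEval : MvPolynomial (Fin m) ℚ →ₐ[ℚ] DualNumber (Polynomial ℚ) :=
  aeval (Pi.single L (inl Polynomial.X) + Pi.single k ε)

theorem dualEval_X (i : Fin m) :
    dualEval L k (X i) =
      (Pi.single L (inl Polynomial.X) + Pi.single k ε : Fin m → DualNumber (Polynomial ℚ)) i :=
  aeval_X _ _

theorem dualEval_sum_C_mul_X (c : Fin m → ℚ) :
    dualEval L k (∑ r, C (c r) * X r) = c L • inl Polynomial.X + c k • ε := by
  rw [dualEval, aeval_sum_C_mul_X]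
  simp [Pi.single_apply, smul_add, Finset.sum_add_distrib]

theorem dualEval_bottRelation_of_ne (hL : ∀ r, r ≤ L) (hn : ∀ i, 1 ≤ n i)
    (ha : ∀ i j k, ¬ k < i → a i j k = 0) {i : Fin m} (hi : i ≠ L) :
    dualEval L k (bottRelation n a i) = 0 := by
  rcases eq_or_ne i k with rfl | hik
  · have hfactor : ∀ j, dualEval L i ((∑ r, C (a i j r) * X r) + X i) = ε := by
      intro j
      rw [map_add, dualEval_sum_C_mul_X, dualEval_X, ha i j L (hL i).not_gt,
        ha i j i (lt_irrefl i)]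
      simp [hi]
    rw [bottRelation, map_mul, map_prod, Finset.prod_congr rfl fun j _ => hfactor j,
      dualEval_X]
    obtain ⟨d, hd⟩ := Nat.exists_eq_add_of_le' (hn i)
    simp [hi, hd, pow_succ', ← mul_assoc]
  · rw [bottRelation, map_mul, dualEval_X]
    simp [hi, hik]

theorem dualEval_bottRelation_top (hkL : k ≠ L) (ha : ∀ i j k, ¬ k < i → a i j k = 0) :
    dualEval L k (bottRelation n a L) = inl Polynomial.X ^ (n L + 1)
      + inl Polynomial.X ^ n L * ((∑ j, a L j k) • ε) := by
  have hfactor : ∀ j, dualEval L k ((∑ r, C (a L j r) * X r) + X L)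
      = inl Polynomial.X + a L j k • ε := by
    intro j
    rw [map_add, dualEval_sum_C_mul_X, dualEval_X, ha L j L (lt_irrefl L)]
    simp [hkL.symm, add_comm]
  have hXL : dualEval L k (X L) = inl Polynomial.X := by simp [dualEval_X, hkL.symm]
  rw [bottRelation, map_mul, map_prod, Finset.prod_congr rfl fun j _ => hfactor j, hXL,
    mul_prod_add_eq_of_mul_eq_zero, Finset.sum_smul, Finset.card_univ, Fintype.card_fin]
  intro i j
  rw [smul_mul_smul_comm, eps_mul_eps, smul_zero]

theorem dualEval_C_mul_X_add_sum (hkL : k ≠ L) {b : ℚ} {w : Fin m → ℚ} (hwL : w L = 0) :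
    dualEval L k (C b * X L + ∑ r, C (w r) * X r) = b • inl Polynomial.X + w k • ε := by
  rw [map_add, map_mul, dualEval_sum_C_mul_X, hwL, zero_smul, zero_add, dualEval_X]
  simp [hkL.symm, Algebra.smul_def]

theorem coeff_eq_of_pow_mem_genBottIdeal (hL : ∀ r, r ≤ L) (hn : ∀ i, 1 ≤ n i)
    (ha : ∀ i j k, ¬ k < i → a i j k = 0) {b : ℚ} (hb : b ≠ 0) {w : Fin m → ℚ} (hwL : w L = 0)
    (hmem : (C b * X L + ∑ r, C (w r) * X r) ^ (n L + 1) ∈ genBottIdeal m n a) (k : Fin m) :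
    ((n L : ℚ) + 1) * w k = b * ∑ j, a L j k := by
  rcases eq_or_ne k L with rfl | hkL
  · simp [hwL, ha k _ k (lt_irrefl k)]
  have hmap := Ideal.map_span_range_le_span_singleton (dualEval L k) _ L
    (fun i hi => dualEval_bottRelation_of_ne hL hn ha hi)
    (Ideal.mem_map_of_mem (dualEval L k) (genBottIdeal_eq_span ▸ hmem))
  rw [map_pow, dualEval_C_mul_X_add_sum hkL hwL, dualEval_bottRelation_top hkL ha] at hmap
  exact natCast_add_one_mul_eq_of_pow_mem_span hb hmap

theorem C_mul_sum_C_mul_X_eq_of_pow_mem_genBottIdeal (hL : ∀ r, r ≤ L) (hn : ∀ i, 1 ≤ n i)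
    (ha : ∀ i j k, ¬ k < i → a i j k = 0) {b : ℚ} (hb : b ≠ 0) {w : Fin m → ℚ} (hwL : w L = 0)
    (hmem : (C b * X L + ∑ r, C (w r) * X r) ^ (n L + 1) ∈ genBottIdeal m n a) :
    C ((n L : ℚ) + 1) * ∑ k, C (w k) * X k = C b * ∑ j : Fin (n L), ∑ k, C (a L j k) * X k := by
  rw [Finset.sum_comm, Finset.mul_sum, Finset.mul_sum]
  refine Finset.sum_congr rfl fun k _ => ?_
  rw [← Finset.sum_mul, ← map_sum, ← mul_assoc, ← mul_assoc, ← C_mul, ← C_mul,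
    coeff_eq_of_pow_mem_genBottIdeal hL hn ha hb hwL hmem k]

end GenBott

theorem stmt_10_general (m : ℕ) (n : Fin m → ℕ) (hn : ∀ i, 1 ≤ n i)
    (a : (i : Fin m) → Fin (n i) → Fin m → ℚ)
    (ha : ∀ i j k, ¬ k < i → a i j k = 0)
    (L : Fin m) (hL : (L : ℕ) = m - 1)
    (c : MvPolynomial (Fin m) ℚ)
    (hc : c = ∑ j : Fin (n L), ∑ k : Fin m, C (a L j k) * X k) :
    (∀ (b : ℚ) (w : Fin m → ℚ), b ≠ 0 → w L = 0 →
      (Ideal.Quotient.mk (genBottIdeal m n a)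
          (C b * X L + ∑ k, C (w k) * X k)) ^ (n L + 1) = 0 →
      Ideal.Quotient.mk (genBottIdeal m n a)
          (C ((n L : ℚ) + 1) * ∑ k, C (w k) * X k) =
        Ideal.Quotient.mk (genBottIdeal m n a) (C b * c)) ∧
    ∃ W : Submodule ℚ (MvPolynomial (Fin m) ℚ ⧸ genBottIdeal m n a),
      Module.finrank ℚ W ≤ 1 ∧
      ∀ (b : ℚ) (w : Fin m → ℚ), b ≠ 0 → w L = 0 →
        (Ideal.Quotient.mk (genBottIdeal m n a)
            (C b * X L + ∑ k, C (w k) * X k)) ^ (n L + 1) = 0 →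
        Ideal.Quotient.mk (genBottIdeal m n a)
            (C b * X L + ∑ k, C (w k) * X k) ∈ W := by
  have hLmax : ∀ r, r ≤ L := fun r => Fin.le_iff_val_le_val.mpr (by omega)
  have hlin : ∀ (b : ℚ) (w : Fin m → ℚ), b ≠ 0 → w L = 0 →
      (Ideal.Quotient.mk (genBottIdeal m n a) (C b * X L + ∑ k, C (w k) * X k)) ^ (n L + 1) = 0 →
      C ((n L : ℚ) + 1) * ∑ k, C (w k) * X k = C b * c := fun b w hb hwL hpow =>
    hc ▸ C_mul_sum_C_mul_X_eq_of_pow_mem_genBottIdeal hLmax hn ha hb hwL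
      (by rwa [← map_pow, Ideal.Quotient.eq_zero_iff_mem] at hpow)
  set v := X L + C ((n L : ℚ) + 1)⁻¹ * c
  refine ⟨fun b w hb hwL hpow => congrArg _ (hlin b w hb hwL hpow),
    ℚ ∙ Ideal.Quotient.mk (genBottIdeal m n a) v,
    by simpa using finrank_span_le_card (R := ℚ) {Ideal.Quotient.mk _ v}, ?_⟩
  intro b w hb hwL hpow
  have hv : C b * X L + ∑ k, C (w k) * X k = C b * v := by
    have hne : ((n L : ℚ) + 1) ≠ 0 := by positivity
    rw [← one_mul (∑ k, _), ← C_1, ← inv_mul_cancel₀ hne, C_mul, mul_assoc,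
      hlin b w hb hwL hpow]
    ring
  rw [hv, map_mul, ← algebraMap_eq, Ideal.Quotient.mk_algebraMap, ← Algebra.smul_def]
  exact Submodule.smul_mem _ b (Submodule.mem_span_singleton_self _)

/-- Lemma 4: let `c = c_1(ξ_m)`.  If `b ≠ 0` and `w` is a linear combination of
`x_1,…,x_{m-1}` with `(b x_m + w)^{n_m+1} = 0`, then `(n_m+1) w = b c`; consequently all
such elements `b x_m + w` lie in a one-dimensional subspace of the degree-two part. -/
theorem stmt_10 (m : ℕ) (hm : 0 < m) (n : Fin m → ℕ) (hn : ∀ i, 1 ≤ n i)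
    (a : (i : Fin m) → Fin (n i) → Fin m → ℚ)
    (ha : ∀ i j k, ¬ k < i → a i j k = 0)
    (L : Fin m) (hL : (L : ℕ) = m - 1)
    (c : MvPolynomial (Fin m) ℚ)
    (hc : c = ∑ j : Fin (n L), ∑ k : Fin m, C (a L j k) * X k) :
    (∀ (b : ℚ) (w : Fin m → ℚ), b ≠ 0 → w L = 0 →
      (Ideal.Quotient.mk (genBottIdeal m n a)
          (C b * X L + ∑ k, C (w k) * X k)) ^ (n L + 1) = 0 →
      Ideal.Quotient.mk (genBottIdeal m n a)
          (C ((n L : ℚ) + 1) * ∑ k, C (w k) * X k) =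
        Ideal.Quotient.mk (genBottIdeal m n a) (C b * c)) ∧
    ∃ W : Submodule ℚ (MvPolynomial (Fin m) ℚ ⧸ genBottIdeal m n a),
      Module.finrank ℚ W ≤ 1 ∧
      ∀ (b : ℚ) (w : Fin m → ℚ), b ≠ 0 → w L = 0 →
        (Ideal.Quotient.mk (genBottIdeal m n a)
            (C b * X L + ∑ k, C (w k) * X k)) ^ (n L + 1) = 0 →
        Ideal.Quotient.mk (genBottIdeal m n a)
            (C b * X L + ∑ k, C (w k) * X k) ∈ W :=
  stmt_10_general m n hn a ha L hL c hc
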